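/- arXiv:2202.11036 — 2 statements merged into one kernel-verified Lean document; each statement's English description precedes it below -/
import Mathlib

section
/- Let (X_k)_{k≥1} be independent nonnegative random variables on a probability space (Ω, 𝓕, ℙ), let λ > 0, and assume 𝔼[e^{−λ X_k}] ≤ 1/2 for every k ≥ 1. Set S_n = X₁ + ⋯ + X_n and define the counting process N(t) = inf{n ≥ 1 : S_n ≥ t} (with inf ∅ = ∞). Then for every b with 0 < b < log 2 there exists a constant C < ∞ depending only on b such that for all t ≥ 0, N(t) is almost surely finite and 𝔼[e^{b N(t)}] ≤ C e^{λt}. -/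
/-!
By the Chernoff bound and independence, `ℙ(S n ≤ t) ≤ e^{λ t} 𝔼[e^{-λ X}]^n ≤ e^{λ t} 2^{-n}`,
which already forces `N t < ∞` almost surely. On the other hand `N t ≤ n + 1` at a time
`n` with `S n ≤ t` (take `n = N t - 1`, or `n = 0`), so
`e^{b N t} ≤ ∑ₙ e^{b (n + 1)} 𝟙{S n ≤ t}`, and integrating gives a geometric series of ratio
`e^b / 2 < 1`.
-/

open MeasureTheory ProbabilityTheory Filter Finset Real

noncomputable def firstPassage (s : ℕ → ℝ) (t : ℝ) : ℕ∞ :=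
  sInf {m : ℕ∞ | ∃ n : ℕ, 1 ≤ n ∧ t ≤ s n ∧ m = n}

lemma lt_of_firstPassage_eq_top {s : ℕ → ℝ} {t : ℝ} (h : firstPassage s t = ⊤) {n : ℕ}
    (hn : 1 ≤ n) : s n < t := by
  by_contra! hsn
  have : firstPassage s t ≤ n := sInf_le ⟨n, hn, hsn, rfl⟩
  simp [h] at this

lemma exists_le_toNat_firstPassage_le {s : ℕ → ℝ} {t : ℝ} (h0 : s 0 ≤ t) :
    ∃ n, s n ≤ t ∧ (firstPassage s t).toNat ≤ n + 1 := by
  cases hN : firstPassage s t with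
  | top => exact ⟨0, h0, by simp⟩
  | coe m =>
    refine ⟨m - 1, ?_, by simp only [ENat.toNat_natCast]; omega⟩
    rcases Nat.lt_or_ge (m - 1) 1 with hm | hm
    · rwa [show m - 1 = 0 by omega]
    · by_contra! hlt
      have : firstPassage s t ≤ (m - 1 : ℕ) := sInf_le ⟨m - 1, hm, hlt.le, rfl⟩
      rw [hN, Nat.cast_le] at this
      omega

section

variable {Ω : Type*} [MeasurableSpace Ω] {μ : Measure Ω}

lemma integrable_exp_neg_mul_of_nonneg [IsFiniteMeasure μ] {Y : Ω → ℝ} (hY : AEMeasurable Y μ)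
    (h0 : 0 ≤ᵐ[μ] Y) {lam : ℝ} (hlam : 0 ≤ lam) :
    Integrable (fun ω => exp (-lam * Y ω)) μ := by
  refine (integrable_const 1).mono' (hY.const_mul _).exp.aestronglyMeasurable ?_
  filter_upwards [h0] with ω hω
  rw [norm_of_nonneg (exp_pos _).le, exp_le_one_iff, neg_mul]
  exact neg_nonpos.2 (mul_nonneg hlam hω)

lemma measure_sum_le_le_of_iIndepFun {X : ℕ → Ω → ℝ} (hmeas : ∀ k, Measurable (X k))
    (hindep : iIndepFun X μ) {lam q : ℝ} (hlam : 0 ≤ lam)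
    (hint : ∀ k, Integrable (fun ω => exp (-lam * X k ω)) μ)
    (hmgf : ∀ k, mgf (X k) μ (-lam) ≤ q) (t : ℝ) (n : ℕ) :
    μ {ω | ∑ k ∈ range n, X k ω ≤ t} ≤ ENNReal.ofReal (exp (lam * t) * q ^ n) := by
  have := hindep.isProbabilityMeasure
  rw [← ofReal_measureReal]
  refine ENNReal.ofReal_le_ofReal ?_
  calc μ.real {ω | ∑ k ∈ range n, X k ω ≤ t}
      ≤ exp (lam * t) * mgf (∑ k ∈ range n, X k) μ (-lam) := by
        simpa [Finset.sum_apply] using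
          measure_le_le_exp_mul_mgf t (neg_nonpos.2 hlam)
            (hindep.integrable_exp_mul_sum hmeas fun k _ => hint k)
    _ = exp (lam * t) * ∏ k ∈ range n, mgf (X k) μ (-lam) := by rw [hindep.mgf_sum hmeas]
    _ ≤ exp (lam * t) * q ^ n := by
        gcongr
        calc ∏ k ∈ range n, mgf (X k) μ (-lam) ≤ ∏ _k ∈ range n, q :=
              prod_le_prod (fun k _ => mgf_nonneg) fun k _ => hmgf k
          _ = q ^ n := by rw [prod_const, card_range]

lemma measure_eq_zero_of_le_geometric {s : Set Ω} {K q : ℝ} (hq0 : 0 ≤ q) (hq1 : q < 1)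
    (h : ∀ᶠ n in atTop, μ s ≤ ENNReal.ofReal (K * q ^ n)) : μ s = 0 := by
  have hlim : Tendsto (fun n => ENNReal.ofReal (K * q ^ n)) atTop (nhds 0) := by
    rw [← ENNReal.ofReal_zero]
    apply ENNReal.tendsto_ofReal
    simpa using (tendsto_pow_atTop_nhds_zero_of_lt_one hq0 hq1).const_mul K
  exact nonpos_iff_eq_zero.1 (ge_of_tendsto hlim h)

lemma lintegral_le_tsum_mul_measure {f : Ω → ENNReal} {A : ℕ → Set Ω} (c : ℕ → ENNReal)
    (hA : ∀ n, MeasurableSet (A n)) (hf : ∀ ω, ∃ n, ω ∈ A n ∧ f ω ≤ c n) :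
    ∫⁻ ω, f ω ∂μ ≤ ∑' n, c n * μ (A n) := by
  calc ∫⁻ ω, f ω ∂μ ≤ ∫⁻ ω, ∑' n, (A n).indicator (fun _ => c n) ω ∂μ := by
        refine lintegral_mono fun ω => ?_
        obtain ⟨n, hn, hle⟩ := hf ω
        exact hle.trans ((Set.indicator_of_mem hn fun _ => c n).symm.le.trans (ENNReal.le_tsum n))
    _ = ∑' n, c n * μ (A n) := by
        rw [lintegral_tsum fun n => (measurable_const.indicator (hA n)).aemeasurable]
        exact tsum_congr fun n => lintegral_indicator_const (hA n) _

lemma integral_exp_mul_le_of_geometric_tail {M : Ω → ℕ} {A : ℕ → Set Ω}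
    (hA : ∀ n, MeasurableSet (A n)) (hM : ∀ ω, ∃ n, ω ∈ A n ∧ M ω ≤ n + 1) {K q b : ℝ}
    (hK : 0 ≤ K) (hq : 0 ≤ q) (hb : 0 ≤ b) (hbq : exp b * q < 1)
    (htail : ∀ n, μ (A n) ≤ ENNReal.ofReal (K * q ^ n)) :
    ∫ ω, exp (b * M ω) ∂μ ≤ exp b / (1 - exp b * q) * K := by
  have hρ : 0 ≤ exp b * q := by positivity
  refine (Real.le_norm_self _).trans ((norm_integral_le_lintegral_norm _).trans ?_)
  refine ENNReal.toReal_le_of_le_ofReal (by have := sub_pos.2 hbq; positivity) ?_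
  calc ∫⁻ ω, ENNReal.ofReal ‖exp (b * M ω)‖ ∂μ
      ≤ ∑' n, ENNReal.ofReal (exp b ^ (n + 1)) * μ (A n) := by
        refine lintegral_le_tsum_mul_measure _ hA fun ω => ?_
        obtain ⟨n, hn, hMn⟩ := hM ω
        refine ⟨n, hn, ENNReal.ofReal_le_ofReal ?_⟩
        rw [norm_of_nonneg (exp_pos _).le, mul_comm, exp_nat_mul]
        exact pow_le_pow_right₀ (one_le_exp hb) hMn
    _ ≤ ∑' n, ENNReal.ofReal (exp b * K * (exp b * q) ^ n) := by
        refine ENNReal.tsum_le_tsum fun n => (mul_le_mul_right (htail n) _).trans_eq ?_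
        rw [← ENNReal.ofReal_mul (by positivity)]
        ring_nf
    _ = ENNReal.ofReal (exp b / (1 - exp b * q) * K) := by
        rw [← ENNReal.ofReal_tsum_of_nonneg (fun n => by positivity)
          ((summable_geometric_of_lt_one hρ hbq).mul_left _), tsum_mul_left,
          tsum_geometric_of_lt_one hρ hbq]
        ring_nf

end

/-- **Exponential moments of the counting process of restarts** (Proposition 3.4, abstract form).
Let `(X k)` be independent nonnegative random variables on a probability space,
`lam > 0`, with `E[exp (−lam * X k)] ≤ 1/2` for every `k`. Put `S n = X 0 + ⋯ + X (n-1)`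
and `N t = inf {n ≥ 1 : S n ≥ t}` (with `inf ∅ = ∞`). Then for every `0 < b < log 2`
there is a constant `C` depending only on `b` such that for all `t ≥ 0`, `N t` is almost
surely finite and `E[exp (b * N t)] ≤ C * exp (lam * t)`. -/
theorem exp_moment_counting_process
    {Ω : Type*} [MeasurableSpace Ω] (P : Measure Ω) [IsProbabilityMeasure P]
    (X : ℕ → Ω → ℝ)
    (hmeas : ∀ k, Measurable (X k))
    (hnonneg : ∀ k ω, 0 ≤ X k ω)
    (hindep : iIndepFun X P)
    (lam : ℝ) (hlam : 0 < lam)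
    (hlap : ∀ k, ∫ ω, Real.exp (-lam * X k ω) ∂P ≤ 1 / 2)
    (S : ℕ → Ω → ℝ) (hS : ∀ n ω, S n ω = ∑ k ∈ Finset.range n, X k ω)
    (N : ℝ → Ω → ℕ∞)
    (hN : ∀ t ω, N t ω = sInf {m : ℕ∞ | ∃ n : ℕ, 1 ≤ n ∧ t ≤ S n ω ∧ m = (n : ℕ∞)}) :
    ∀ b : ℝ, 0 < b → b < Real.log 2 →
      ∃ C : ℝ, ∀ t : ℝ, 0 ≤ t →
        (∀ᵐ ω ∂P, N t ω < ⊤) ∧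
        ∫ ω, Real.exp (b * ((N t ω).toNat : ℝ)) ∂P ≤ C * Real.exp (lam * t) := by
  obtain rfl : S = fun n ω => ∑ k ∈ range n, X k ω := funext₂ hS
  obtain rfl : N = fun t ω => firstPassage (fun n => ∑ k ∈ range n, X k ω) t := funext₂ hN
  intro b hb hblt
  have hbq : exp b * (1 / 2) < 1 := by
    have := exp_lt_exp.2 hblt
    rw [exp_log two_pos] at this
    linarith
  refine ⟨exp b / (1 - exp b * (1 / 2)), fun t ht => ?_⟩
  have htail := measure_sum_le_le_of_iIndepFun hmeas hindep hlam.le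
    (fun k => integrable_exp_neg_mul_of_nonneg (hmeas k).aemeasurable
      (ae_of_all _ (hnonneg k)) hlam.le) hlap t
  refine ⟨?_, ?_⟩
  · refine ae_iff.2 (measure_eq_zero_of_le_geometric (K := exp (lam * t)) (q := 1 / 2)
      (by norm_num) (by norm_num) ?_)
    filter_upwards [eventually_ge_atTop 1] with n hn
    refine (measure_mono fun ω hω => ?_).trans (htail n)
    exact (lt_of_firstPassage_eq_top (not_lt_top_iff.1 hω) hn).le
  · refine integral_exp_mul_le_of_geometric_tail
      (fun n => measurableSet_le (Finset.measurable_sum _ fun k _ => hmeas k) measurable_const)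
      (fun ω => exists_le_toNat_firstPassage_le (by simpa using ht))
      (exp_pos _).le (by norm_num) hb.le hbq htail
end

section
/- Let m ∈ ℝ, let a ≤ b be real numbers, let φ : [a,b] → ℝ be differentiable, and let g, ψ : [a,b] → ℝ be continuous with ψ ≥ 0, such that for all t ∈ [a,b]: φ'(t) + 2m φ(t) + ψ(t) ≤ 2 g(t) φ(t). Then for all a ≤ t' ≤ t ≤ b: φ(t) + ∫_{t'}^{t} exp(−2m(t − r) + 2∫_r^t g(u) du) · ψ(r) dr ≤ exp(−2m(t − t') + 2∫_{t'}^{t} g(u) du) · φ(t'). -/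
/-!
With the integrating factor `w r = exp (-∫_r^t k)`, where `k = 2m - 2g`, the energy
`r ↦ w r * φ r + ∫_s^r w ψ` has derivative `w (φ' + k φ + ψ) ≤ 0`, hence is antitone on
`[s, t]`. Comparing its values at `s = t'` and `t` (where `w t = 1`) gives the estimate, after
expanding `-∫_r^t (2m - 2g) = -2m(t - r) + 2∫_r^t g`.
-/

open MeasureTheory intervalIntegral Set

section FundamentalTheorem

variable {E : Type*} [NormedAddCommGroup E] [NormedSpace ℝ E] {f : ℝ → E} {a b x : ℝ}

theorem ContinuousOn.hasDerivAt_integral_right [CompleteSpace E] (hf : ContinuousOn f (Icc a b))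
    (hx : x ∈ Ioo a b) : HasDerivAt (fun r => ∫ u in a..r, f u) (f x) x :=
  integral_hasDerivAt_right
    ((hf.mono (Icc_subset_Icc_right hx.2.le)).intervalIntegrable_of_Icc hx.1.le)
    ((hf.mono Ioo_subset_Icc_self).stronglyMeasurableAtFilter isOpen_Ioo x hx)
    (hf.continuousAt (Icc_mem_nhds hx.1 hx.2))

theorem ContinuousOn.hasDerivAt_integral_left [CompleteSpace E] (hf : ContinuousOn f (Icc a b))
    (hx : x ∈ Ioo a b) : HasDerivAt (fun r => ∫ u in r..b, f u) (-f x) x :=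
  integral_hasDerivAt_left
    ((hf.mono (Icc_subset_Icc_left hx.1.le)).intervalIntegrable_of_Icc hx.2.le)
    ((hf.mono Ioo_subset_Icc_self).stronglyMeasurableAtFilter isOpen_Ioo x hx)
    (hf.continuousAt (Icc_mem_nhds hx.1 hx.2))

theorem ContinuousOn.continuousOn_integral_right (hab : a ≤ b) (hf : ContinuousOn f (Icc a b)) :
    ContinuousOn (fun r => ∫ u in a..r, f u) (Icc a b) := by
  simpa only [uIcc_of_le hab] using
    continuousOn_primitive_interval (hf.integrableOn_Icc.mono_set (uIcc_of_le hab).subset)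

theorem ContinuousOn.continuousOn_integral_left (hab : a ≤ b) (hf : ContinuousOn f (Icc a b)) :
    ContinuousOn (fun r => ∫ u in r..b, f u) (Icc a b) := by
  simpa only [uIcc_of_le hab] using
    continuousOn_primitive_interval_left (hf.integrableOn_Icc.mono_set (uIcc_of_le hab).subset)

end FundamentalTheorem

theorem mul_add_integral_le_of_hasDerivAt {s t : ℝ} (hst : s ≤ t) {φ φ' w w' ψ : ℝ → ℝ}
    (hφc : ContinuousOn φ (Icc s t)) (hφ : ∀ x ∈ Ioo s t, HasDerivAt φ (φ' x) x)
    (hwc : ContinuousOn w (Icc s t)) (hw : ∀ x ∈ Ioo s t, HasDerivAt w (w' x) x)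
    (hψ : ContinuousOn ψ (Icc s t))
    (hle : ∀ x ∈ Ioo s t, w' x * φ x + w x * (φ' x + ψ x) ≤ 0) :
    w t * φ t + ∫ u in s..t, w u * ψ u ≤ w s * φ s := by
  have hanti : AntitoneOn (fun r => w r * φ r + ∫ u in s..r, w u * ψ u) (Icc s t) := by
    refine antitoneOn_of_hasDerivWithinAt_nonpos
      (f' := fun x => w' x * φ x + w x * φ' x + w x * ψ x) (convex_Icc s t)
      ((hwc.mul hφc).add ((hwc.mul hψ).continuousOn_integral_right hst))
      (fun x hx => ?_) (fun x hx => ?_)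
    · rw [interior_Icc] at hx ⊢
      exact (((hw x hx).mul (hφ x hx)).add
        ((hwc.mul hψ).hasDerivAt_integral_right hx)).hasDerivWithinAt
    · rw [interior_Icc] at hx
      linarith [hle x hx, mul_add (w x) (φ' x) (ψ x)]
  simpa using hanti (left_mem_Icc.2 hst) (right_mem_Icc.2 hst) hst

theorem add_integral_exp_mul_le_of_deriv_add_mul_add_nonpos {s t : ℝ} (hst : s ≤ t)
    {φ φ' k ψ : ℝ → ℝ} (hφc : ContinuousOn φ (Icc s t))
    (hφ : ∀ x ∈ Ioo s t, HasDerivAt φ (φ' x) x)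
    (hk : ContinuousOn k (Icc s t)) (hψ : ContinuousOn ψ (Icc s t))
    (hle : ∀ x ∈ Ioo s t, φ' x + k x * φ x + ψ x ≤ 0) :
    φ t + ∫ r in s..t, Real.exp (-∫ u in r..t, k u) * ψ r ≤
      Real.exp (-∫ u in s..t, k u) * φ s := by
  set w : ℝ → ℝ := fun r => Real.exp (-∫ u in r..t, k u)
  have hwc : ContinuousOn w (Icc s t) := (hk.continuousOn_integral_left hst).neg.rexp
  have hw : ∀ x ∈ Ioo s t, HasDerivAt w (w x * k x) x := fun x hx => by
    simpa using (hk.hasDerivAt_integral_left hx).neg.exp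
  have h := mul_add_integral_le_of_hasDerivAt hst hφc hφ hwc hw hψ fun x hx =>
    calc w x * k x * φ x + w x * (φ' x + ψ x) = w x * (φ' x + k x * φ x + ψ x) := by ring
      _ ≤ 0 := mul_nonpos_of_nonneg_of_nonpos (Real.exp_pos _).le (hle x hx)
  simpa [w] using h

theorem gronwall_energy_estimate_general
    (m a b : ℝ) (φ φ' g ψ : ℝ → ℝ)
    (hφ : ∀ t ∈ Set.Icc a b, HasDerivWithinAt φ (φ' t) (Set.Icc a b) t)
    (hg : ContinuousOn g (Set.Icc a b))
    (hψ : ContinuousOn ψ (Set.Icc a b))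
    (hineq : ∀ t ∈ Set.Icc a b, φ' t + 2 * m * φ t + ψ t ≤ 2 * g t * φ t) :
    ∀ t' t : ℝ, a ≤ t' → t' ≤ t → t ≤ b →
      φ t + ∫ r in t'..t,
          Real.exp (-2 * m * (t - r) + 2 * ∫ u in r..t, g u) * ψ r
        ≤ Real.exp (-2 * m * (t - t') + 2 * ∫ u in t'..t, g u) * φ t' := by
  intro t' t ht' htt' htb
  have hsub : Icc t' t ⊆ Icc a b := Icc_subset_Icc ht' htb
  have hφ_deriv : ∀ x ∈ Ioo t' t, HasDerivAt φ (φ' x) x := fun x hx =>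
    (hφ x (hsub (Ioo_subset_Icc_self hx))).hasDerivAt
      (Icc_mem_nhds (ht'.trans_lt hx.1) (hx.2.trans_le htb))
  have hexponent : ∀ r ∈ Icc t' t,
      -∫ u in r..t, (2 * m - 2 * g u) = -2 * m * (t - r) + 2 * ∫ u in r..t, g u := by
    intro r hr
    have hgi : IntervalIntegrable g volume r t :=
      (hg.mono ((Icc_subset_Icc_left hr.1).trans hsub)).intervalIntegrable_of_Icc hr.2
    rw [integral_sub intervalIntegrable_const (hgi.const_mul 2),
      intervalIntegral.integral_const_mul, intervalIntegral.integral_const_mul,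
      intervalIntegral.integral_const, smul_eq_mul]
    ring
  have h := add_integral_exp_mul_le_of_deriv_add_mul_add_nonpos htt'
    (k := fun u => 2 * m - 2 * g u)
    (fun x hx => (hφ x (hsub hx)).continuousWithinAt.mono hsub) hφ_deriv
    (continuousOn_const.sub (continuousOn_const.mul (hg.mono hsub))) (hψ.mono hsub)
    fun x hx => by linarith [hineq x (hsub (Ioo_subset_Icc_self hx))]
  have hweight : EqOn (fun r => Real.exp (-∫ u in r..t, (2 * m - 2 * g u)) * ψ r)
      (fun r => Real.exp (-2 * m * (t - r) + 2 * ∫ u in r..t, g u) * ψ r) (uIcc t' t) :=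
    fun r hr => by dsimp only; rw [hexponent r (uIcc_of_le htt' ▸ hr)]
  rwa [hexponent t' (left_mem_Icc.2 htt'), integral_congr hweight] at h

/-- **Grönwall-type energy estimate** (analytic core of Proposition 3.1).
Let `m ∈ ℝ`, `a ≤ b`, let `φ : [a,b] → ℝ` be differentiable with derivative `φ'`, and let
`g, ψ : [a,b] → ℝ` be continuous with `ψ ≥ 0`, such that for all `t ∈ [a,b]`
`φ' t + 2 m φ t + ψ t ≤ 2 g t * φ t`. Then for all `a ≤ t' ≤ t ≤ b`,
`φ t + ∫_{t'}^{t} exp (−2m(t−r) + 2∫_r^t g) * ψ r dr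
  ≤ exp (−2m(t−t') + 2∫_{t'}^t g) * φ t'`. -/
theorem gronwall_energy_estimate
    (m a b : ℝ) (hab : a ≤ b) (φ φ' g ψ : ℝ → ℝ)
    (hφ : ∀ t ∈ Set.Icc a b, HasDerivWithinAt φ (φ' t) (Set.Icc a b) t)
    (hg : ContinuousOn g (Set.Icc a b))
    (hψ : ContinuousOn ψ (Set.Icc a b))
    (hψ0 : ∀ t ∈ Set.Icc a b, 0 ≤ ψ t)
    (hineq : ∀ t ∈ Set.Icc a b, φ' t + 2 * m * φ t + ψ t ≤ 2 * g t * φ t) :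
    ∀ t' t : ℝ, a ≤ t' → t' ≤ t → t ≤ b →
      φ t + ∫ r in t'..t,
          Real.exp (-2 * m * (t - r) + 2 * ∫ u in r..t, g u) * ψ r
        ≤ Real.exp (-2 * m * (t - t') + 2 * ∫ u in t'..t, g u) * φ t' :=
  gronwall_energy_estimate_general m a b φ φ' g ψ hφ hg hψ hineq
end
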